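/- Let ‖·‖ be a norm on M_n(ℂ) and ‖·‖_* its dual norm with respect to the pairing ⟨Y|X⟩ = Tr(Y*X). Then the unit ball of ‖·‖_* is C*-convex if and only if ‖·‖ is an L-norm. -/

import Mathlib

open Matrix BigOperators ComplexOrder

/-- Square complex matrices. -/
abbrev Mat (n : ℕ) := Matrix (Fin n) (Fin n) ℂ

/-- `N` is a norm on `Mat n`. -/
def IsMatrixNorm {n : ℕ} (N : Mat n → ℝ) : Prop :=
  (∀ A, N A = 0 ↔ A = 0) ∧
  (∀ (c : ℂ) (A : Mat n), N (c • A) = ‖c‖ * N A) ∧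
  (∀ A B : Mat n, N (A + B) ≤ N A + N B)

/-- A set of matrices is C*-convex. -/
def CStarConvex {n : ℕ} (K : Set (Mat n)) : Prop :=
  ∀ (k : ℕ) (C A : Fin k → Mat n), (∀ i, A i ∈ K) →
    (∑ i, (C i)ᴴ * C i = 1) → (∑ i, (C i)ᴴ * A i * C i) ∈ K

/-- `N` is an M-norm. -/
def IsMNorm {n : ℕ} (N : Mat n → ℝ) : Prop :=
  ∀ (k : ℕ) (C X : Fin k → Mat n), (∑ i, (C i)ᴴ * C i = 1) →
    N (∑ i, (C i)ᴴ * X i * C i) ≤ ⨆ i, N (X i)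

/-- `N` is an L-norm. -/
def IsLNorm {n : ℕ} (N : Mat n → ℝ) : Prop :=
  ∀ (k : ℕ) (C : Fin k → Mat n) (X : Mat n), (∑ i, (C i)ᴴ * C i = 1) →
    ∑ i, N (C i * X * (C i)ᴴ) ≤ N X

/-- The dual norm with respect to the pairing `⟨Y|X⟩ = Tr(Yᴴ X)`. -/
noncomputable def dualNorm {n : ℕ} (N : Mat n → ℝ) (Y : Mat n) : ℝ :=
  sSup {r | ∃ X : Mat n, N X ≤ 1 ∧ r = ‖(Yᴴ * X).trace‖}

/-- The operator (spectral) norm of a matrix. -/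
noncomputable def opNorm {n : ℕ} (A : Mat n) : ℝ :=
  ‖Matrix.toEuclideanCLM (𝕜 := ℂ) (n := Fin n) A‖

/-- The trace norm `‖A‖₁ = Tr((AᴴA)^{1/2})`. -/
noncomputable def traceNorm {n : ℕ} (A : Mat n) : ℝ :=
  (((Matrix.posSemidef_conjTranspose_mul_self A).1.eigenvectorUnitary : Mat n) *
    diagonal (((↑) : ℝ → ℂ) ∘ Real.sqrt ∘ (Matrix.posSemidef_conjTranspose_mul_self A).1.eigenvalues) *
    (star (Matrix.posSemidef_conjTranspose_mul_self A).1.eigenvectorUnitary : Mat n)).trace.re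

/-- The numerical radius. -/
noncomputable def numRadius {n : ℕ} (A : Mat n) : ℝ :=
  sSup {r | ∃ x : EuclideanSpace ℂ (Fin n), ‖x‖ = 1 ∧
    r = ‖(inner ℂ x (Matrix.toEuclideanCLM (𝕜 := ℂ) (n := Fin n) A x))‖}

/-!
By trace duality, `Tr((∑ Cᵢᴴ Aᵢ Cᵢ)ᴴ X) = ∑ Tr(Aᵢᴴ (Cᵢ X Cᵢᴴ))`. If `N` is an L-norm and every
`‖Aᵢ‖_* ≤ 1`, the right side is at most `∑ N(Cᵢ X Cᵢᴴ) ≤ N X`, so `∑ Cᵢᴴ Aᵢ Cᵢ` lies in the dual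
unit ball. Conversely, choosing by Hahn–Banach a norming functional `Aᵢ` of `Cᵢ X Cᵢᴴ` in the dual
unit ball makes the right side equal to `∑ N(Cᵢ X Cᵢᴴ)`, which C*-convexity bounds by `N X`.
-/

theorem Matrix.exists_trace_mul_eq {m n R : Type*} [Fintype m] [Fintype n] [CommSemiring R]
    (f : Matrix m n R →ₗ[R] R) : ∃ Y : Matrix n m R, ∀ X, (Y * X).trace = f X := by
  classical
  refine ⟨of fun j i => f (single i j 1), fun X => ?_⟩
  have : traceLinearMap n R R ∘ₗ mulLeftLinearMap n R (of fun j i => f (single i j 1)) = f :=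
    (stdBasis R m n).ext fun ⟨i, j⟩ => by simp [stdBasis_eq_single, trace_mul_single]
  exact LinearMap.congr_fun this X

theorem Matrix.trace_conjTranspose_sum_mul_mul {k m ι R : Type*} [Fintype k] [Fintype m]
    [Fintype ι] [CommSemiring R] [StarRing R] (C : ι → Matrix k m R) (Y : ι → Matrix k k R)
    (X : Matrix m m R) :
    ((∑ i, (C i)ᴴ * Y i * C i)ᴴ * X).trace = ∑ i, ((Y i)ᴴ * (C i * X * (C i)ᴴ)).trace := by
  simp only [conjTranspose_sum, Finset.sum_mul, trace_sum, conjTranspose_mul,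
    conjTranspose_conjTranspose, Matrix.mul_assoc]
  refine Finset.sum_congr rfl fun i _ => ?_
  rw [trace_mul_comm]
  simp only [Matrix.mul_assoc]

section

variable {n : ℕ} {N : Mat n → ℝ}

def IsMatrixNorm.toAddGroupNorm (hN : IsMatrixNorm N) : AddGroupNorm (Mat n) where
  toFun := N
  map_zero' := (hN.1 0).2 rfl
  add_le' := hN.2.2
  neg' A := by rw [← neg_one_smul ℂ A, hN.2.1]; simp
  eq_zero_of_map_eq_zero' A := (hN.1 A).1

/-- A type synonym, so that `N` does not compete with the product topology of `Mat n`. -/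
def NormedMat (N : Mat n → ℝ) (_ : IsMatrixNorm N) : Type := Mat n

namespace NormedMat

noncomputable instance (hN : IsMatrixNorm N) : AddCommGroup (NormedMat N hN) :=
  inferInstanceAs (AddCommGroup (Mat n))

noncomputable instance (hN : IsMatrixNorm N) : NormedAddCommGroup (NormedMat N hN) :=
  @AddGroupNorm.toNormedAddCommGroup (NormedMat N hN) _ hN.toAddGroupNorm

noncomputable instance (hN : IsMatrixNorm N) : Module ℂ (NormedMat N hN) :=
  inferInstanceAs (Module ℂ (Mat n))

noncomputable instance (hN : IsMatrixNorm N) : NormedSpace ℂ (NormedMat N hN) where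
  norm_smul_le c A := (hN.2.1 c A).le

instance (hN : IsMatrixNorm N) : FiniteDimensional ℂ (NormedMat N hN) :=
  inferInstanceAs (Module.Finite ℂ (Mat n))

noncomputable def ofMat (hN : IsMatrixNorm N) : Mat n ≃ₗ[ℂ] NormedMat N hN :=
  LinearEquiv.refl ℂ (Mat n)

noncomputable def tracePairing (hN : IsMatrixNorm N) (Y : Mat n) :
    StrongDual ℂ (NormedMat N hN) :=
  LinearMap.toContinuousLinearMap
    (traceLinearMap (Fin n) ℂ ℂ ∘ₗ mulLeftLinearMap (Fin n) ℂ Yᴴ ∘ₗ (ofMat hN).symm.toLinearMap)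

theorem surjective_tracePairing (hN : IsMatrixNorm N) :
    Function.Surjective (tracePairing hN) := by
  intro g
  obtain ⟨Y, hY⟩ := exists_trace_mul_eq (g.toLinearMap ∘ₗ (ofMat hN).toLinearMap)
  refine ⟨Yᴴ, ContinuousLinearMap.ext fun X => ?_⟩
  simpa [tracePairing] using hY ((ofMat hN).symm X)

end NormedMat

namespace IsMatrixNorm

open NormedMat

theorem nonneg (hN : IsMatrixNorm N) (X : Mat n) : 0 ≤ N X :=
  norm_nonneg (ofMat hN X)

theorem dualNorm_eq_norm_tracePairing (hN : IsMatrixNorm N) (Y : Mat n) :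
    dualNorm N Y = ‖tracePairing hN Y‖ := by
  rw [dualNorm, ← ContinuousLinearMap.sSup_unitClosedBall_eq_norm]
  congr 1
  ext r
  simp only [Set.mem_image, mem_closedBall_zero_iff]
  exact ⟨fun ⟨X, hX, hr⟩ => ⟨ofMat hN X, hX, hr.symm⟩, fun ⟨X, hX, hr⟩ => ⟨X, hX, hr.symm⟩⟩

theorem dualNorm_le_one_iff (hN : IsMatrixNorm N) {Y : Mat n} :
    dualNorm N Y ≤ 1 ↔ ∀ X, ‖(Yᴴ * X).trace‖ ≤ N X := by
  rw [hN.dualNorm_eq_norm_tracePairing, ContinuousLinearMap.opNorm_le_iff zero_le_one]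
  simp only [one_mul]
  exact (ofMat hN).forall_congr_left

theorem exists_dualNorm_le_one_trace_eq (hN : IsMatrixNorm N) (Z : Mat n) :
    ∃ Y, dualNorm N Y ≤ 1 ∧ (Yᴴ * Z).trace = N Z := by
  obtain ⟨g, hg, hgZ⟩ := exists_dual_vector'' ℂ (ofMat hN Z)
  obtain ⟨Y, rfl⟩ := surjective_tracePairing hN g
  exact ⟨Y, (hN.dualNorm_eq_norm_tracePairing Y).trans_le hg, hgZ⟩

end IsMatrixNorm

end

theorem dual_unitBall_cstarConvex_iff_LNorm {n : ℕ} (N : Mat n → ℝ)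
    (hN : IsMatrixNorm N) :
    CStarConvex {Y : Mat n | dualNorm N Y ≤ 1} ↔ IsLNorm N := by
  simp only [CStarConvex, IsLNorm, Set.mem_ofPred_eq, hN.dualNorm_le_one_iff]
  constructor
  · intro hK k C X hC
    choose Y hY hYX using fun i => hN.exists_dualNorm_le_one_trace_eq (C i * X * (C i)ᴴ)
    have hsum : ((∑ i, (C i)ᴴ * Y i * C i)ᴴ * X).trace = ∑ i, (N (C i * X * (C i)ᴴ) : ℂ) := by
      rw [trace_conjTranspose_sum_mul_mul]
      exact Finset.sum_congr rfl fun i _ => hYX i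
    calc ∑ i, N (C i * X * (C i)ᴴ)
        = ‖((∑ i, (C i)ᴴ * Y i * C i)ᴴ * X).trace‖ := by
          rw [hsum, ← Complex.ofReal_sum, Complex.norm_real,
            Real.norm_of_nonneg (Finset.sum_nonneg fun i _ => hN.nonneg _)]
      _ ≤ N X := hK k C Y (fun i => hN.dualNorm_le_one_iff.1 (hY i)) hC X
  · intro hL k C A hA hC X
    calc ‖((∑ i, (C i)ᴴ * A i * C i)ᴴ * X).trace‖
        ≤ ∑ i, ‖((A i)ᴴ * (C i * X * (C i)ᴴ)).trace‖ := by
          rw [trace_conjTranspose_sum_mul_mul]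
          exact norm_sum_le _ _
      _ ≤ ∑ i, N (C i * X * (C i)ᴴ) := Finset.sum_le_sum fun i _ => hA i _
      _ ≤ N X := hL k C X hC
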